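/- Let (λ, u) be an eigenpair of K with ‖u‖_π = 1 and let V be the Type B matrix (V_{TT} = M⁻¹). Then ‖(I_n − V)u‖_π ≤ |λ| / σ(K_{SS}), where σ(K_{SS}) is the smallest absolute value of an eigenvalue of K_{SS}. -/

import Mathlib

open Matrix BigOperators

/-- Assemble an `n × n` matrix from four blocks indexed by a set `S` and its complement. -/
def rcmcAssemble {n : ℕ} (S : Finset (Fin n))
    (ASS : Matrix ↥S ↥S ℝ) (AST : Matrix ↥S ↥(Sᶜ) ℝ)
    (ATS : Matrix ↥(Sᶜ) ↥S ℝ) (ATT : Matrix ↥(Sᶜ) ↥(Sᶜ) ℝ) :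
    Matrix (Fin n) (Fin n) ℝ := fun i j =>
  if hi : i ∈ S then
    if hj : j ∈ S then ASS ⟨i, hi⟩ ⟨j, hj⟩
    else AST ⟨i, hi⟩ ⟨j, Finset.mem_compl.mpr hj⟩
  else
    if hj : j ∈ S then ATS ⟨i, Finset.mem_compl.mpr hi⟩ ⟨j, hj⟩
    else ATT ⟨i, Finset.mem_compl.mpr hi⟩ ⟨j, Finset.mem_compl.mpr hj⟩

/-- The `π`-norm on `ℝⁿ`: `‖a‖_π = √(∑ i, a i² / π i)`. -/
noncomputable def pinorm {m : Type*} [Fintype m] (π : m → ℝ) (a : m → ℝ) : ℝ :=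
  Real.sqrt (∑ i, a i ^ 2 / π i)

/-!
Write `C = K_SS⁻¹ K_ST` and `C' = K_TS K_SS⁻¹`. Detailed balance makes `C'` the adjoint of `C`
for the `π`-weighted inner products on `ℝ^S` and `ℝ^T`, so `M = 1 + C'C` is invertible and
`V = Ω* M⁻¹ Ω`. Then `w = (I - V)u` satisfies `w_T = C' w_S` and
`w_S + C w_T = u_S + C u_T = λ K_SS⁻¹ u_S` (the `S`-rows of `Ku = λu`), whence
`‖w‖² = ⟪w_S, w_S + C C' w_S⟫ = λ ⟪w_S, K_SS⁻¹ u_S⟫` and `‖w‖ ≤ |λ| ‖K_SS⁻¹ u_S‖`.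
Finally `K_SS` is self-adjoint for the `π`-weighted inner product (it is similar to the symmetric
matrix `D^{-1/2} K_SS D^{1/2}`, `D = diag π`), so `‖K_SS⁻¹ x‖ ≤ ‖x‖ / σ(K_SS)`; and
`‖u_S‖ ≤ ‖u‖ = 1`.
-/

section WeightedInner

variable {m n : Type*} [Fintype m] [Fintype n] {p : m → ℝ}

noncomputable def pinner (p x y : m → ℝ) : ℝ := ∑ i, x i * y i / p i

lemma pinorm_eq_sqrt_pinner (p x : m → ℝ) : pinorm p x = √(pinner p x x) := by
  simp only [pinorm, pinner, sq]

lemma pinner_comm (p x y : m → ℝ) : pinner p x y = pinner p y x := by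
  simp only [pinner, mul_comm]

lemma pinner_add_right (p x y z : m → ℝ) :
    pinner p x (y + z) = pinner p x y + pinner p x z := by
  simp only [pinner, Pi.add_apply, mul_add, add_div, Finset.sum_add_distrib]

lemma pinner_smul_self (p x : m → ℝ) (c : ℝ) :
    pinner p (c • x) (c • x) = c ^ 2 * pinner p x x := by
  simp only [pinner, Pi.smul_apply, smul_eq_mul, Finset.mul_sum]
  exact Finset.sum_congr rfl fun i _ => by ring

lemma pinner_self_nonneg (hp : ∀ i, 0 < p i) (x : m → ℝ) : 0 ≤ pinner p x x :=
  Finset.sum_nonneg fun i _ => div_nonneg (mul_self_nonneg _) (hp i).le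

lemma pinner_self_eq_zero (hp : ∀ i, 0 < p i) {x : m → ℝ} : pinner p x x = 0 ↔ x = 0 := by
  refine ⟨fun h => funext fun i => ?_, fun h => by simp [h, pinner]⟩
  have := (Finset.sum_eq_zero_iff_of_nonneg fun i _ =>
    div_nonneg (mul_self_nonneg (x i)) (hp i).le).mp h i (Finset.mem_univ i)
  simpa [(hp i).ne'] using this

lemma two_mul_pinner_le (hp : ∀ i, 0 < p i) (x y : m → ℝ) :
    2 * pinner p x y ≤ pinner p x x + pinner p y y := by
  simp only [pinner, Finset.mul_sum, ← Finset.sum_add_distrib]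
  gcongr with i
  rw [mul_div_assoc', ← add_div]
  exact div_le_div_of_nonneg_right (by nlinarith [sq_nonneg (x i - y i)]) (hp i).le

/-- `A * diagonal p = diagonal q * Bᵀ` says that `A` is the adjoint of `B` for `pinner`. -/
lemma pinner_mulVec_left [DecidableEq m] [DecidableEq n] {q : n → ℝ} (hp : ∀ i, 0 < p i)
    (hq : ∀ j, 0 < q j) {A : Matrix n m ℝ} {B : Matrix m n ℝ}
    (hAB : A * diagonal p = diagonal q * Bᵀ)
    (x : m → ℝ) (y : n → ℝ) :
    pinner q (A *ᵥ x) y = pinner p x (B *ᵥ y) := by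
  simp only [pinner, mulVec, dotProduct, Finset.sum_mul, Finset.mul_sum, Finset.sum_div]
  rw [Finset.sum_comm]
  refine Finset.sum_congr rfl fun i _ => Finset.sum_congr rfl fun j _ => ?_
  have hji : A j i * p i = q j * B i j := by
    simpa [mul_diagonal, diagonal_mul] using congr_fun (congr_fun hAB j) i
  have := (hp i).ne'
  have := (hq j).ne'
  field_simp
  linear_combination x i * y j * hji

end WeightedInner

lemma Finset.restrict_sub {ι : Type*} (T : Finset ι) (f g : ι → ℝ) :
    T.restrict (f - g) = T.restrict f - T.restrict g := rfl

lemma Finset.restrict_smul {ι : Type*} (T : Finset ι) (c : ℝ) (f : ι → ℝ) :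
    T.restrict (c • f) = c • T.restrict f := rfl

section Restrict

variable {ι α : Type*} [Fintype ι] [DecidableEq ι] (S : Finset ι)

lemma pinner_eq_add_compl (p x y : ι → ℝ) :
    pinner p x y = pinner (S.restrict p) (S.restrict x) (S.restrict y)
      + pinner (Sᶜ.restrict p) (Sᶜ.restrict x) (Sᶜ.restrict y) := by
  simp only [pinner, Finset.restrict]
  rw [Finset.sum_coe_sort S (fun i => x i * y i / p i),
    Finset.sum_coe_sort Sᶜ (fun i => x i * y i / p i), Finset.sum_add_sum_compl]

lemma pinner_restrict_self_le {p : ι → ℝ} (hp : ∀ i, 0 < p i) (x : ι → ℝ) :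
    pinner (S.restrict p) (S.restrict x) (S.restrict x) ≤ pinner p x x := by
  rw [pinner_eq_add_compl S p x x, le_add_iff_nonneg_right]
  exact pinner_self_nonneg (fun i : ↥Sᶜ => hp i) _

lemma restrict_mulVec (T : Finset α) (K : Matrix α ι ℝ) (u : ι → ℝ) :
    T.restrict (K *ᵥ u) = K.submatrix (↑) ((↑) : S → ι) *ᵥ S.restrict u
      + K.submatrix (↑) ((↑) : ↥Sᶜ → ι) *ᵥ Sᶜ.restrict u := by
  ext i
  simp only [Finset.restrict, Pi.add_apply, mulVec, dotProduct, submatrix_apply]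
  rw [Finset.sum_coe_sort S (fun j => K i j * u j), Finset.sum_coe_sort Sᶜ (fun j => K i j * u j),
    Finset.sum_add_sum_compl]

lemma restrict_add_inv_mulVec_of_mulVec_eq_smul {K : Matrix ι ι ℝ}
    (hinv : IsUnit (K.submatrix ((↑) : S → ι) (↑)).det) {lam : ℝ} {u : ι → ℝ}
    (heig : K *ᵥ u = lam • u) :
    S.restrict u
        + ((K.submatrix ((↑) : S → ι) (↑))⁻¹ * K.submatrix ((↑) : S → ι) ((↑) : ↥Sᶜ → ι))
          *ᵥ Sᶜ.restrict u
      = lam • ((K.submatrix ((↑) : S → ι) (↑))⁻¹ *ᵥ S.restrict u) := by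
  have := congr_arg ((K.submatrix ((↑) : S → ι) (↑))⁻¹ *ᵥ S.restrict ·) heig
  simp only [restrict_mulVec S S, mulVec_add, mulVec_mulVec, nonsing_inv_mul _ hinv, one_mulVec,
    Finset.restrict_smul, mulVec_smul] at this
  exact this

end Restrict

section OneAddMul

variable {s t : Type*} [Fintype s] [Fintype t] [DecidableEq s] [DecidableEq t]
  {p : s → ℝ} {q : t → ℝ} {C : Matrix s t ℝ} {C' : Matrix t s ℝ}

lemma isUnit_det_one_add_mul (hp : ∀ i, 0 < p i) (hq : ∀ j, 0 < q j)
    (hadj : C' * diagonal p = diagonal q * Cᵀ) : IsUnit (1 + C' * C).det := by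
  refine isUnit_iff_ne_zero.mpr fun h0 => ?_
  obtain ⟨v, hv0, hv⟩ := exists_mulVec_eq_zero_iff.mpr h0
  have hquad :
      pinner q v ((1 + C' * C) *ᵥ v) = pinner q v v + pinner p (C *ᵥ v) (C *ᵥ v) := by
    rw [add_mulVec, one_mulVec, pinner_add_right, ← mulVec_mulVec, pinner_comm q v (C' *ᵥ _),
      pinner_mulVec_left hp hq hadj]
  rw [hv, show pinner q v 0 = 0 by simp [pinner]] at hquad
  have := pinner_self_nonneg hp (C *ᵥ v)
  exact hv0 ((pinner_self_eq_zero hq).mp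
    (le_antisymm (by linarith) (pinner_self_nonneg hq v)))

lemma pinner_add_pinner_mulVec_le (hp : ∀ i, 0 < p i) (hq : ∀ j, 0 < q j)
    (hadj : C' * diagonal p = diagonal q * Cᵀ) (a : s → ℝ) :
    pinner p a a + pinner q (C' *ᵥ a) (C' *ᵥ a)
      ≤ pinner p (a + C *ᵥ (C' *ᵥ a)) (a + C *ᵥ (C' *ᵥ a)) := by
  set v := a + C *ᵥ (C' *ᵥ a)
  have hav : pinner p a a + pinner q (C' *ᵥ a) (C' *ᵥ a) = pinner p a v := by
    rw [pinner_add_right, pinner_mulVec_left hp hq hadj]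
  have := two_mul_pinner_le hp a v
  have := pinner_self_nonneg hq (C' *ᵥ a)
  linarith

end OneAddMul

section TypeB

variable {n : ℕ} (S : Finset (Fin n)) (C : Matrix S ↥Sᶜ ℝ) (C' : Matrix ↥Sᶜ S ℝ)
  (W : Matrix ↥Sᶜ ↥Sᶜ ℝ)

/-- The block matrix `[[C W C', -C W], [-W C', W]] = Ω* W Ω` with `Ω = (-C', 1)`. For
`C = K_SS⁻¹ K_ST`, `C' = K_TS K_SS⁻¹` and `W = M⁻¹` it is the Type B matrix `V`. -/
def typeBMatrix : Matrix (Fin n) (Fin n) ℝ :=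
  rcmcAssemble S (C * W * C') (-(C * W)) (-(W * C')) W

lemma rcmcAssemble_submatrix_mem_mem (A : Matrix S S ℝ) (B : Matrix S ↥Sᶜ ℝ)
    (B' : Matrix ↥Sᶜ S ℝ) (D : Matrix ↥Sᶜ ↥Sᶜ ℝ) :
    (rcmcAssemble S A B B' D).submatrix (↑) (↑) = A := by
  ext i j
  simp [rcmcAssemble, i.2, j.2]

lemma rcmcAssemble_submatrix_mem_compl (A : Matrix S S ℝ) (B : Matrix S ↥Sᶜ ℝ)
    (B' : Matrix ↥Sᶜ S ℝ) (D : Matrix ↥Sᶜ ↥Sᶜ ℝ) :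
    (rcmcAssemble S A B B' D).submatrix (↑) ((↑) : ↥Sᶜ → Fin n) = B := by
  ext i j
  simp [rcmcAssemble, i.2, Finset.mem_compl.mp j.2]

lemma rcmcAssemble_submatrix_compl_mem (A : Matrix S S ℝ) (B : Matrix S ↥Sᶜ ℝ)
    (B' : Matrix ↥Sᶜ S ℝ) (D : Matrix ↥Sᶜ ↥Sᶜ ℝ) :
    (rcmcAssemble S A B B' D).submatrix ((↑) : ↥Sᶜ → Fin n) (↑) = B' := by
  ext i j
  simp [rcmcAssemble, Finset.mem_compl.mp i.2, j.2]

lemma rcmcAssemble_submatrix_compl_compl (A : Matrix S S ℝ) (B : Matrix S ↥Sᶜ ℝ)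
    (B' : Matrix ↥Sᶜ S ℝ) (D : Matrix ↥Sᶜ ↥Sᶜ ℝ) :
    (rcmcAssemble S A B B' D).submatrix ((↑) : ↥Sᶜ → Fin n) (↑) = D := by
  ext i j
  simp [rcmcAssemble, Finset.mem_compl.mp i.2, Finset.mem_compl.mp j.2]

variable (u : Fin n → ℝ)

lemma restrict_one_sub_typeBMatrix_mulVec :
    S.restrict ((1 - typeBMatrix S C C' W) *ᵥ u)
      = S.restrict u + C *ᵥ (W *ᵥ (Sᶜ.restrict u - C' *ᵥ S.restrict u)) := by
  rw [sub_mulVec, one_mulVec, Finset.restrict_sub, restrict_mulVec S S, typeBMatrix,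
    rcmcAssemble_submatrix_mem_mem, rcmcAssemble_submatrix_mem_compl]
  simp only [mulVec_sub, neg_mulVec, ← mulVec_mulVec]
  abel

lemma restrict_compl_one_sub_typeBMatrix_mulVec :
    Sᶜ.restrict ((1 - typeBMatrix S C C' W) *ᵥ u)
      = Sᶜ.restrict u - W *ᵥ (Sᶜ.restrict u - C' *ᵥ S.restrict u) := by
  rw [sub_mulVec, one_mulVec, Finset.restrict_sub, restrict_mulVec S Sᶜ, typeBMatrix,
    rcmcAssemble_submatrix_compl_mem, rcmcAssemble_submatrix_compl_compl]
  simp only [mulVec_sub, neg_mulVec, ← mulVec_mulVec]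
  abel

lemma restrict_one_sub_typeBMatrix_mulVec_add :
    S.restrict ((1 - typeBMatrix S C C' W) *ᵥ u)
        + C *ᵥ Sᶜ.restrict ((1 - typeBMatrix S C C' W) *ᵥ u)
      = S.restrict u + C *ᵥ Sᶜ.restrict u := by
  rw [restrict_one_sub_typeBMatrix_mulVec, restrict_compl_one_sub_typeBMatrix_mulVec, add_assoc,
    ← mulVec_add, add_sub_cancel]

lemma restrict_compl_one_sub_typeBMatrix_mulVec_eq (hW : (1 + C' * C) * W = 1) :
    Sᶜ.restrict ((1 - typeBMatrix S C C' W) *ᵥ u)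
      = C' *ᵥ S.restrict ((1 - typeBMatrix S C C' W) *ᵥ u) := by
  have hz : (1 + C' * C) *ᵥ (W *ᵥ (Sᶜ.restrict u - C' *ᵥ S.restrict u))
      = Sᶜ.restrict u - C' *ᵥ S.restrict u := by
    rw [mulVec_mulVec, hW, one_mulVec]
  rw [restrict_one_sub_typeBMatrix_mulVec, restrict_compl_one_sub_typeBMatrix_mulVec]
  generalize W *ᵥ (Sᶜ.restrict u - C' *ᵥ S.restrict u) = z at hz ⊢
  rw [add_mulVec, one_mulVec, ← mulVec_mulVec, eq_sub_iff_add_eq] at hz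
  rw [mulVec_add, ← hz]
  abel

lemma pinner_one_sub_typeBMatrix_mulVec_le {π : Fin n → ℝ} (hπ : ∀ i, 0 < π i)
    (hadj : C' * diagonal (S.restrict π) = diagonal (Sᶜ.restrict π) * Cᵀ) :
    pinner π ((1 - typeBMatrix S C C' (1 + C' * C)⁻¹) *ᵥ u)
        ((1 - typeBMatrix S C C' (1 + C' * C)⁻¹) *ᵥ u)
      ≤ pinner (S.restrict π) (S.restrict u + C *ᵥ Sᶜ.restrict u)
        (S.restrict u + C *ᵥ Sᶜ.restrict u) := by
  have hpS : ∀ i : S, 0 < S.restrict π i := fun i => hπ i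
  have hpT : ∀ j : ↥Sᶜ, 0 < Sᶜ.restrict π j := fun j => hπ j
  have hW := mul_nonsing_inv _ (isUnit_det_one_add_mul hpS hpT hadj)
  rw [pinner_eq_add_compl S, ← restrict_one_sub_typeBMatrix_mulVec_add,
    restrict_compl_one_sub_typeBMatrix_mulVec_eq S C C' _ u hW]
  exact pinner_add_pinner_mulVec_le hpS hpT hadj _

end TypeB

section Reversible

variable {ι s t : Type*} [Fintype ι] [Fintype s] [Fintype t] [DecidableEq s] [DecidableEq t]

lemma submatrix_mul_diagonal_eq [DecidableEq ι] {K : Matrix ι ι ℝ} {π : ι → ℝ}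
    (hK : K * diagonal π = diagonal π * Kᵀ) (f : s → ι) (g : t → ι) :
    K.submatrix f g * diagonal (π ∘ g) = diagonal (π ∘ f) * (K.submatrix g f)ᵀ := by
  ext i j
  simpa [mul_diagonal, diagonal_mul] using congr_fun (congr_fun hK (f i)) (g j)

lemma inv_mul_eq_mul_inv_transpose {A D : Matrix s s ℝ} (h : A * D = D * Aᵀ) :
    A⁻¹ * D = D * A⁻¹ᵀ := by
  by_cases hA : IsUnit A.det
  · have hAt : IsUnit Aᵀ.det := by rwa [det_transpose]
    calc A⁻¹ * D = A⁻¹ * (D * Aᵀ) * Aᵀ⁻¹ := by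
          rw [Matrix.mul_assoc, Matrix.mul_assoc, mul_nonsing_inv _ hAt, Matrix.mul_one]
      _ = D * A⁻¹ᵀ := by
          rw [← h, ← Matrix.mul_assoc, nonsing_inv_mul _ hA, Matrix.one_mul,
            transpose_nonsing_inv]
  · simp [nonsing_inv_apply_not_isUnit _ hA]

lemma mul_inv_mul_diagonal_eq {p : s → ℝ} {q : t → ℝ} {P : Matrix s s ℝ}
    {B : Matrix s t ℝ} {B' : Matrix t s ℝ} (hP : P * diagonal p = diagonal p * Pᵀ)
    (hB : B' * diagonal p = diagonal q * Bᵀ) :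
    B' * P⁻¹ * diagonal p = diagonal q * (P⁻¹ * B)ᵀ := by
  rw [Matrix.mul_assoc, inv_mul_eq_mul_inv_transpose hP, ← Matrix.mul_assoc, hB, transpose_mul,
    Matrix.mul_assoc]

end Reversible

section Spectrum

open scoped MatrixOrder

variable {s : Type*} [Fintype s] [DecidableEq s]

/-- `σ(A)`, the least absolute value of a real eigenvalue of `A`; `sInf ∅ = 0` when there is
none. -/
noncomputable def minAbsSpectrum (A : Matrix s s ℝ) : ℝ :=
  sInf {r | ∃ μ ∈ spectrum ℝ A, r = |μ|}

lemma minAbsSpectrum_nonneg (A : Matrix s s ℝ) : 0 ≤ minAbsSpectrum A :=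
  Real.sInf_nonneg (by rintro _ ⟨μ, -, rfl⟩; exact abs_nonneg μ)

lemma minAbsSpectrum_le_abs {A : Matrix s s ℝ} {μ : ℝ} (hμ : μ ∈ spectrum ℝ A) :
    minAbsSpectrum A ≤ |μ| :=
  csInf_le ⟨0, by rintro _ ⟨ν, -, rfl⟩; exact abs_nonneg ν⟩ ⟨μ, hμ, rfl⟩

lemma minAbsSpectrum_pos {A : Matrix s s ℝ} (hA : IsUnit A) (hne : (spectrum ℝ A).Nonempty) :
    0 < minAbsSpectrum A := by
  have hset : {r | ∃ μ ∈ spectrum ℝ A, r = |μ|} = (|·|) '' spectrum ℝ A := by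
    ext r
    simp [eq_comm]
  obtain ⟨μ, hμ, hμσ⟩ : minAbsSpectrum A ∈ (|·|) '' spectrum ℝ A := by
    rw [minAbsSpectrum, hset]
    exact (hne.image _).csInf_mem (A.finite_spectrum.image _)
  have hμ0 : μ ≠ 0 := by
    rintro rfl
    exact (spectrum.zero_mem_iff ℝ).mp hμ hA
  exact hμσ ▸ abs_pos.mpr hμ0

lemma sq_mul_dotProduct_le_of_isHermitian {H : Matrix s s ℝ} (hH : H.IsHermitian) {c : ℝ}
    (hc : 0 ≤ c) (hspec : ∀ μ ∈ spectrum ℝ H, c ≤ |μ|) (x : s → ℝ) :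
    c ^ 2 * (x ⬝ᵥ x) ≤ (H *ᵥ x) ⬝ᵥ (H *ᵥ x) := by
  have hpsd : (H * H - c ^ 2 • (1 : Matrix s s ℝ)).PosSemidef := by
    have hcfc :
        H * H - c ^ 2 • (1 : Matrix s s ℝ) = cfc (fun μ : ℝ => μ * μ - c ^ 2) H := by
      rw [cfc_sub _ _ H, cfc_mul _ _ H, cfc_id' ℝ H, cfc_const (c ^ 2) H,
        Algebra.algebraMap_eq_smul_one]
    rw [hcfc, ← nonneg_iff_posSemidef]
    refine cfc_nonneg fun μ hμ => ?_
    nlinarith [hspec μ hμ, abs_mul_abs_self μ, abs_nonneg μ]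
  have := hpsd.dotProduct_mulVec_nonneg x
  rw [star_trivial, sub_mulVec, smul_mulVec, one_mulVec, dotProduct_sub, dotProduct_smul,
    ← mulVec_mulVec, dotProduct_mulVec, ← mulVec_transpose,
    ← conjTranspose_eq_transpose_of_trivial, hH.eq, smul_eq_mul] at this
  linarith

variable {p : s → ℝ} {A : Matrix s s ℝ}

lemma spectrum_diagonal_inv_mul_mul_diagonal {d : s → ℝ} (hd : ∀ i, d i ≠ 0) :
    spectrum ℝ (diagonal d⁻¹ * A * diagonal d) = spectrum ℝ A := by
  have h₁ : diagonal d * diagonal d⁻¹ = 1 := by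
    rw [diagonal_mul_diagonal, ← diagonal_one]
    exact congr_arg diagonal (funext fun i => mul_inv_cancel₀ (hd i))
  have h₂ : diagonal d⁻¹ * diagonal d = 1 := by
    rw [diagonal_mul_diagonal, ← diagonal_one]
    exact congr_arg diagonal (funext fun i => inv_mul_cancel₀ (hd i))
  exact spectrum.units_conjugate' (u := ⟨diagonal d, diagonal d⁻¹, h₁, h₂⟩)

lemma isHermitian_diagonal_inv_mul_mul_diagonal (hp : ∀ i, 0 < p i)
    (hA : A * diagonal p = diagonal p * Aᵀ) :
    (diagonal (fun i => √(p i))⁻¹ * A * diagonal (fun i => √(p i))).IsHermitian := by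
  ext i j
  have hij : A j i * p i = p j * A i j := by
    simpa [mul_diagonal, diagonal_mul] using congr_fun (congr_fun hA j) i
  have hi := Real.sqrt_pos.mpr (hp i)
  have hj := Real.sqrt_pos.mpr (hp j)
  simp only [conjTranspose_apply, mul_diagonal, diagonal_mul, Pi.inv_apply, star_trivial]
  rw [← Real.sq_sqrt (hp i).le, ← Real.sq_sqrt (hp j).le] at hij
  field_simp
  linear_combination hij

lemma spectrum_nonempty_of_mul_diagonal [Nonempty s] (hp : ∀ i, 0 < p i)
    (hA : A * diagonal p = diagonal p * Aᵀ) : (spectrum ℝ A).Nonempty := by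
  have hH := isHermitian_diagonal_inv_mul_mul_diagonal hp hA
  rw [← spectrum_diagonal_inv_mul_mul_diagonal fun i => (Real.sqrt_pos.mpr (hp i)).ne']
  exact ⟨_, hH.eigenvalues_mem_spectrum_real (Classical.arbitrary s)⟩

lemma sq_mul_pinner_le_pinner_mulVec (hp : ∀ i, 0 < p i)
    (hA : A * diagonal p = diagonal p * Aᵀ) {c : ℝ} (hc : 0 ≤ c)
    (hspec : ∀ μ ∈ spectrum ℝ A, c ≤ |μ|) (x : s → ℝ) :
    c ^ 2 * pinner p x x ≤ pinner p (A *ᵥ x) (A *ᵥ x) := by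
  set d : s → ℝ := fun i => √(p i)
  have hd : ∀ i, d i ≠ 0 := fun i => (Real.sqrt_pos.mpr (hp i)).ne'
  have hnorm : ∀ y, pinner p y y = (diagonal d⁻¹ *ᵥ y) ⬝ᵥ (diagonal d⁻¹ *ᵥ y) := by
    intro y
    refine Finset.sum_congr rfl fun i _ => ?_
    have hdi : d i ^ 2 = p i := Real.sq_sqrt (hp i).le
    rw [mulVec_diagonal, Pi.inv_apply, ← hdi]
    field_simp
  have hconj : (diagonal d⁻¹ * A * diagonal d) *ᵥ (diagonal d⁻¹ *ᵥ x)
      = diagonal d⁻¹ *ᵥ (A *ᵥ x) := by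
    rw [mulVec_mulVec, Matrix.mul_assoc, diagonal_mul_diagonal,
      show (fun i => d i * d⁻¹ i) = fun _ => 1 from funext fun i => mul_inv_cancel₀ (hd i),
      diagonal_one, Matrix.mul_one, mulVec_mulVec]
  rw [hnorm, hnorm, ← hconj]
  refine sq_mul_dotProduct_le_of_isHermitian (isHermitian_diagonal_inv_mul_mul_diagonal hp hA)
    hc (fun μ hμ => hspec μ ?_) _
  rwa [spectrum_diagonal_inv_mul_mul_diagonal hd] at hμ

lemma pinner_inv_mulVec_le (hp : ∀ i, 0 < p i) (hA : A * diagonal p = diagonal p * Aᵀ)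
    (hdet : IsUnit A.det) (x : s → ℝ) :
    pinner p (A⁻¹ *ᵥ x) (A⁻¹ *ᵥ x) ≤ pinner p x x / minAbsSpectrum A ^ 2 := by
  cases isEmpty_or_nonempty s
  · simp [pinner]
  have hσ := minAbsSpectrum_pos ((isUnit_iff_isUnit_det A).mpr hdet)
    (spectrum_nonempty_of_mul_diagonal hp hA)
  rw [le_div_iff₀ (by positivity), mul_comm]
  have := sq_mul_pinner_le_pinner_mulVec hp hA (minAbsSpectrum_nonneg A)
    (fun μ => minAbsSpectrum_le_abs) (A⁻¹ *ᵥ x)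
  rwa [mulVec_mulVec, mul_nonsing_inv _ hdet, one_mulVec] at this

end Spectrum

theorem rcmc_stmt16_general (n : ℕ) (K : Matrix (Fin n) (Fin n) ℝ) (π : Fin n → ℝ)
    (hπpos : ∀ i, 0 < π i)
    (hdb : K * Matrix.diagonal π = Matrix.diagonal π * Kᵀ)
    (S : Finset (Fin n))
    (hinv : IsUnit (K.submatrix ((↑) : ↥S → Fin n) ((↑) : ↥S → Fin n)).det)
    (lam : ℝ) (u : Fin n → ℝ)
    (heig : K.mulVec u = lam • u) (hu : pinorm π u = 1) :
    let KSS := K.submatrix ((↑) : ↥S → Fin n) ((↑) : ↥S → Fin n)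
    let KST := K.submatrix ((↑) : ↥S → Fin n) ((↑) : ↥(Sᶜ) → Fin n)
    let KTS := K.submatrix ((↑) : ↥(Sᶜ) → Fin n) ((↑) : ↥S → Fin n)
    let M := (1 + KTS * KSS⁻¹ * KSS⁻¹ * KST : Matrix ↥(Sᶜ) ↥(Sᶜ) ℝ)
    let VTT := M⁻¹
    let V := rcmcAssemble S (KSS⁻¹ * KST * VTT * KTS * KSS⁻¹)
      (-(KSS⁻¹ * KST * VTT)) (-(VTT * KTS * KSS⁻¹)) VTT
    let σKSS := sInf {r : ℝ | ∃ μ ∈ spectrum ℝ KSS, r = |μ|}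
    pinorm π ((1 - V).mulVec u) ≤ |lam| / σKSS := by
  intro KSS KST KTS M VTT V σKSS
  have hV :
      V = typeBMatrix S (KSS⁻¹ * KST) (KTS * KSS⁻¹) (1 + KTS * KSS⁻¹ * (KSS⁻¹ * KST))⁻¹ := by
    simp only [V, VTT, M, typeBMatrix, Matrix.mul_assoc]
  have hSS : KSS * diagonal (S.restrict π) = diagonal (S.restrict π) * KSSᵀ :=
    submatrix_mul_diagonal_eq hdb _ _
  have hadj :
      KTS * KSS⁻¹ * diagonal (S.restrict π) = diagonal (Sᶜ.restrict π) * (KSS⁻¹ * KST)ᵀ :=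
    mul_inv_mul_diagonal_eq hSS (submatrix_mul_diagonal_eq hdb _ _)
  have hπu : pinner π u u = 1 := by
    rwa [pinorm_eq_sqrt_pinner, Real.sqrt_eq_one] at hu
  have hw : pinner π ((1 - V) *ᵥ u) ((1 - V) *ᵥ u) ≤ (|lam| / minAbsSpectrum KSS) ^ 2 := calc
    _ ≤ pinner (S.restrict π) (lam • (KSS⁻¹ *ᵥ S.restrict u)) (lam • (KSS⁻¹ *ᵥ S.restrict u)) := by
        rw [hV, ← restrict_add_inv_mulVec_of_mulVec_eq_smul S hinv heig]
        exact pinner_one_sub_typeBMatrix_mulVec_le S _ _ u hπpos hadj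
    _ = lam ^ 2 * pinner (S.restrict π) (KSS⁻¹ *ᵥ S.restrict u) (KSS⁻¹ *ᵥ S.restrict u) :=
        pinner_smul_self _ _ _
    _ ≤ lam ^ 2 * (pinner π u u / minAbsSpectrum KSS ^ 2) := by
        gcongr
        exact (pinner_inv_mulVec_le (fun i : S => hπpos i) hSS hinv _).trans
          (div_le_div_of_nonneg_right (pinner_restrict_self_le S hπpos u) (sq_nonneg _))
    _ = (|lam| / minAbsSpectrum KSS) ^ 2 := by rw [hπu, div_pow, sq_abs, mul_one_div]
  rw [pinorm_eq_sqrt_pinner]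
  exact (Real.sqrt_le_sqrt hw).trans_eq
    (Real.sqrt_sq (div_nonneg (abs_nonneg lam) (minAbsSpectrum_nonneg KSS)))

/-- For an eigenpair `(λ, u)` of `K` with `‖u‖_π = 1` and the Type-B matrix
`V` (`V_TT = M⁻¹`), `‖(I − V)u‖_π ≤ |λ| / σ(K_SS)` where `σ(K_SS)` is the smallest
absolute value of an eigenvalue of `K_SS`. -/
theorem rcmc_stmt16 (n : ℕ) (K : Matrix (Fin n) (Fin n) ℝ) (π : Fin n → ℝ)
    (hoff : ∀ i j, i ≠ j → 0 ≤ K i j)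
    (hcol : ∀ j, ∑ i, K i j = 0)
    (hπpos : ∀ i, 0 < π i) (hπsum : ∑ i, π i = 1)
    (hdb : K * Matrix.diagonal π = Matrix.diagonal π * Kᵀ)
    (S : Finset (Fin n))
    (hinv : IsUnit (K.submatrix ((↑) : ↥S → Fin n) ((↑) : ↥S → Fin n)).det)
    (lam : ℝ) (u : Fin n → ℝ)
    (heig : K.mulVec u = lam • u) (hu : pinorm π u = 1) :
    let KSS := K.submatrix ((↑) : ↥S → Fin n) ((↑) : ↥S → Fin n)
    let KST := K.submatrix ((↑) : ↥S → Fin n) ((↑) : ↥(Sᶜ) → Fin n)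
    let KTS := K.submatrix ((↑) : ↥(Sᶜ) → Fin n) ((↑) : ↥S → Fin n)
    let M := (1 + KTS * KSS⁻¹ * KSS⁻¹ * KST : Matrix ↥(Sᶜ) ↥(Sᶜ) ℝ)
    let VTT := M⁻¹
    let V := rcmcAssemble S (KSS⁻¹ * KST * VTT * KTS * KSS⁻¹)
      (-(KSS⁻¹ * KST * VTT)) (-(VTT * KTS * KSS⁻¹)) VTT
    let σKSS := sInf {r : ℝ | ∃ μ ∈ spectrum ℝ KSS, r = |μ|}
    pinorm π ((1 - V).mulVec u) ≤ |lam| / σKSS :=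
  rcmc_stmt16_general n K π hπpos hdb S hinv lam u heig hu
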